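/- arXiv:1405.1516 — 2 statements merged into one kernel-verified Lean document; each statement's English description precedes it below -/
import Mathlib

section
/- Let A ∈ ℂ^{n×n} be diagonalizable, A = X D X^{-1} with D diagonal, and let A' = A + H. Then every eigenvalue λ' of A' lies within distance κ₂(X)·‖H‖₂ of some eigenvalue λ of A, where κ₂(X) = ‖X‖₂‖X^{-1}‖₂ (the Bauer–Fike theorem). -/
/-!
Conjugating by `X` turns `A + H` into `D + K` with `K = X⁻¹ H X`, which has the same spectrum and
`‖K‖ ≤ κ₂(X) ‖H‖`. If `λ'` lies at distance `c > 0` from every `d i`, then `λ' - D` is invertible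
with `‖(λ' - D)⁻¹‖ ≤ 1 / c`. Since `λ' - (D + K) = (λ' - D) - K` is singular, the Neumann series
forces `‖(λ' - D)⁻¹‖ ‖K‖ ≥ 1`, that is `c ≤ ‖K‖`.
-/

/-- Spectral norm (operator 2-norm) of a square complex matrix. -/
noncomputable def specNorm {k : ℕ} (X : Matrix (Fin k) (Fin k) ℂ) : ℝ :=
  ‖LinearMap.toContinuousLinearMap (Matrix.toEuclideanLin X)‖

open Matrix
open scoped Matrix.Norms.L2Operator

theorem specNorm_eq_l2_opNorm {k : ℕ} (X : Matrix (Fin k) (Fin k) ℂ) : specNorm X = ‖X‖ := rfl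

namespace spectrum

variable {R A : Type*} [CommSemiring R]

theorem units_conjugate_add [Ring A] [Algebra R A] {a h : A} {u : Aˣ} :
    spectrum R (u * a * ↑u⁻¹ + h) = spectrum R (a + ↑u⁻¹ * h * u) := by
  rw [← units_conjugate (a := a + ↑u⁻¹ * h * u) (u := u)]
  simp [mul_add, add_mul, mul_assoc]

theorem one_le_norm_resolvent_mul_norm_of_mem_add [NormedRing A] [HasSummableGeomSeries A]
    [Algebra R A] {a k : A} {z : R} (hz : z ∈ resolventSet R a) (hzk : z ∈ spectrum R (a + k)) :
    1 ≤ ‖resolvent a z‖ * ‖k‖ := by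
  cases subsingleton_or_nontrivial A
  · simp [of_subsingleton] at hzk
  obtain ⟨u, hu⟩ := mem_resolventSet_iff.mp hz
  have hres : resolvent a z = ↑u⁻¹ := by rw [resolvent, ← hu, Ring.inverse_unit]
  by_contra! hsmall
  have hk : ‖-k‖ < ‖(↑u⁻¹ : A)‖⁻¹ := by
    rwa [norm_neg, ← mul_one ‖_‖⁻¹, lt_inv_mul_iff₀ (Units.norm_pos _), ← hres]
  apply notMem_iff.mpr _ hzk
  simpa [hu, ← sub_eq_add_neg, sub_sub] using (u.add (-k) hk).isUnit

end spectrum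

namespace Matrix

variable {n 𝕜 : Type*} [Fintype n] [DecidableEq n]

theorem resolvent_diagonal [Field 𝕜] {d : n → 𝕜} {z : 𝕜} (hz : ∀ i, z ≠ d i) :
    resolvent (diagonal d) z = diagonal fun i => (z - d i)⁻¹ := by
  rw [resolvent, algebraMap_eq_diagonal, diagonal_sub, ← nonsing_inv_eq_ringInverse]
  refine inv_eq_right_inv ?_
  rw [diagonal_mul_diagonal, ← diagonal_one]
  congr 1
  funext i
  exact mul_inv_cancel₀ (sub_ne_zero.2 (hz i))

variable [RCLike 𝕜]

theorem l2_opNorm_resolvent_diagonal_le {d : n → 𝕜} {z : 𝕜} {c : ℝ} (hc : 0 < c)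
    (hzd : ∀ i, c ≤ ‖z - d i‖) : ‖resolvent (diagonal d) z‖ ≤ c⁻¹ := by
  have hz : ∀ i, z ≠ d i := fun i h => by simpa [h] using hc.trans_le (hzd i)
  rw [resolvent_diagonal hz, l2_opNorm_diagonal, pi_norm_le_iff_of_nonneg (inv_nonneg.2 hc.le)]
  intro i
  rw [norm_inv]
  exact inv_anti₀ hc (hzd i)

theorem exists_norm_sub_le_of_mem_spectrum_diagonal_add {d : n → 𝕜} {K : Matrix n n 𝕜} {z : 𝕜}
    (hz : z ∈ spectrum 𝕜 (diagonal d + K)) : ∃ i, ‖z - d i‖ ≤ ‖K‖ := by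
  have : Nonempty n := by
    by_contra! hempty
    exact hz (isUnit_of_subsingleton _)
  obtain ⟨i, hi⟩ := Finite.exists_min fun i => ‖z - d i‖
  refine ⟨i, ?_⟩
  rcases (norm_nonneg (z - d i)).eq_or_lt with h0 | hpos
  · exact h0 ▸ norm_nonneg K
  have hres : z ∈ resolventSet 𝕜 (diagonal d) := by
    rw [spectrum.mem_resolventSet_iff, ← spectrum.notMem_iff, spectrum_diagonal]
    rintro ⟨j, rfl⟩
    simpa using hpos.trans_le (hi j)
  have hK := (spectrum.one_le_norm_resolvent_mul_norm_of_mem_add hres hz).trans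
    (mul_le_mul_of_nonneg_right (l2_opNorm_resolvent_diagonal_le hpos hi) (norm_nonneg _))
  rwa [← div_eq_inv_mul, one_le_div hpos] at hK

end Matrix

/-- Bauer–Fike: If `A = X D X⁻¹` with `D = diagonal d` and
`A' = A + H`, then every eigenvalue `λ'` of `A'` lies within `κ₂(X)‖H‖₂` of some
eigenvalue `d i` of `A`. -/
theorem bauer_fike (n : ℕ)
    (A H X : Matrix (Fin n) (Fin n) ℂ) (d : Fin n → ℂ)
    (hX : IsUnit X) (hA : A = X * Matrix.diagonal d * X⁻¹)
    (lam' : ℂ) (hlam' : lam' ∈ spectrum ℂ (A + H)) :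
    ∃ i : Fin n, ‖lam' - d i‖ ≤ specNorm X * specNorm X⁻¹ * specNorm H := by
  have hconj := spectrum.units_conjugate_add (R := ℂ) (a := diagonal d) (h := H) (u := hX.unit)
  rw [coe_units_inv, hX.unit_spec, ← hA] at hconj
  rw [hconj] at hlam'
  obtain ⟨i, hi⟩ := exists_norm_sub_le_of_mem_spectrum_diagonal_add hlam'
  refine ⟨i, ?_⟩
  simp only [specNorm_eq_l2_opNorm]
  calc ‖lam' - d i‖ ≤ ‖X⁻¹ * H * X‖ := hi
    _ ≤ ‖X⁻¹‖ * ‖H‖ * ‖X‖ := norm_mul₃_le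
    _ = ‖X‖ * ‖X⁻¹‖ * ‖H‖ := by ring
end

section
/- Let V ∈ ℂ^{n×n} and W ∈ ℂ^{m×n} be σ-conformably ordered (columns come in conjugate pairs for indices ≤ 2σ and are real afterwards), with V invertible, and let V_R, W_R be their realifications. Then V_R is a real invertible matrix, W_R is real, and the matrix F = W_R V_R^{-1} ∈ ℝ^{m×n} satisfies F V = W over ℂ. -/
/-!
On a conjugate column pair `(a, conj a)` realification produces the real pair `(Re a, Im a)`, so
`V_R` and `W_R` are real, and it is undone by one fixed matrix: `V = V_R U⁻¹` and `W = W_R U⁻¹`.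
Hence `V_R` is invertible with `V`, and `W_R V_R⁻¹ V = W_R U⁻¹ = W`.
-/

open Complex ComplexConjugate

theorem Fin.forall_of_forall_pairs {n σ : ℕ} {P : Fin n → Prop}
    (hpair : ∀ i : Fin n, (i : ℕ) < 2 * σ → (i : ℕ) % 2 = 0 →
      ∃ hi : (i : ℕ) + 1 < n, P i ∧ P ⟨i + 1, hi⟩)
    (hrest : ∀ i : Fin n, 2 * σ ≤ (i : ℕ) → P i) (i : Fin n) : P i := by
  rcases le_or_gt (2 * σ) i with hle | hlt
  · exact hrest i hle
  rcases Nat.mod_two_eq_zero_or_one i with heven | hodd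
  · exact (hpair i hlt heven).elim fun _ h => h.1
  · obtain ⟨_, -, h⟩ := hpair ⟨i - 1, by omega⟩ (by simp; omega) (by simp; omega)
    convert h
    dsimp only
    omega

/-- The inverse `U⁻¹` of the realification matrix: block diagonal with blocks `[[1, 1], [I, -I]]`
on the first `σ` column pairs, the identity after them. -/
noncomputable def complexifyMatrix (n σ : ℕ) : Matrix (Fin n) (Fin n) ℂ := Matrix.of fun k i =>
  if (i : ℕ) < 2 * σ ∧ (k : ℕ) / 2 = (i : ℕ) / 2 then
    if (k : ℕ) % 2 = 0 then 1 else if (i : ℕ) % 2 = 0 then I else -I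
  else if k = i then 1 else 0

section complexifyMatrix

variable {m n σ : ℕ} (B : Matrix (Fin m) (Fin n) ℂ) (j : Fin m) {i i' : Fin n}

theorem mul_complexifyMatrix_apply_of_le (hi : 2 * σ ≤ (i : ℕ)) :
    (B * complexifyMatrix n σ) j i = B j i := by
  rw [Matrix.mul_apply, Fintype.sum_eq_single i]
  · simp [complexifyMatrix, hi.not_gt]
  · intro k hk
    simp [complexifyMatrix, hi.not_gt, hk]

theorem mul_complexifyMatrix_apply_fst (hi : (i : ℕ) < 2 * σ) (heven : (i : ℕ) % 2 = 0)
    (hi' : (i' : ℕ) = i + 1) : (B * complexifyMatrix n σ) j i = B j i + B j i' * I := by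
  rw [Matrix.mul_apply, Fintype.sum_eq_add i i' (by omega)]
  · simp [complexifyMatrix, hi, heven, hi', show ((i : ℕ) + 1) / 2 = i / 2 by omega,
      show ((i : ℕ) + 1) % 2 = 1 by omega]
  · intro k ⟨hki, hki'⟩
    simp only [complexifyMatrix, Matrix.of_apply, hki, if_false, mul_eq_zero]
    right
    rw [if_neg]
    omega

theorem mul_complexifyMatrix_apply_snd (hi : (i : ℕ) < 2 * σ) (heven : (i : ℕ) % 2 = 0)
    (hi' : (i' : ℕ) = i + 1) : (B * complexifyMatrix n σ) j i' = B j i - B j i' * I := by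
  rw [Matrix.mul_apply, Fintype.sum_eq_add i i' (by omega)]
  · simp [complexifyMatrix, heven, hi', show ((i : ℕ) + 1) / 2 = i / 2 by omega,
      show ((i : ℕ) + 1) % 2 = 1 by omega, show (i : ℕ) + 1 < 2 * σ by omega, Fin.ext_iff,
      sub_eq_add_neg]
  · intro k ⟨hki, hki'⟩
    simp only [complexifyMatrix, Matrix.of_apply, hki', if_false, mul_eq_zero]
    right
    rw [if_neg]
    omega

end complexifyMatrix

section IsRealification

variable {m n σ : ℕ} {A B : Matrix (Fin m) (Fin n) ℂ}

/-- `A` is σ-conformably ordered and `B` is its realification. -/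
def IsRealification (σ : ℕ) (A B : Matrix (Fin m) (Fin n) ℂ) : Prop :=
  (∀ i : Fin n, (i : ℕ) < 2 * σ → (i : ℕ) % 2 = 0 → ∃ hi : (i : ℕ) + 1 < n,
    (∀ j, A j ⟨i + 1, hi⟩ = conj (A j i)) ∧
    (∀ j, B j i = (A j i + A j ⟨i + 1, hi⟩) / 2) ∧
    (∀ j, B j ⟨i + 1, hi⟩ = (A j i - A j ⟨i + 1, hi⟩) / (2 * I))) ∧
  ∀ i : Fin n, 2 * σ ≤ (i : ℕ) → ∀ j, B j i = A j i ∧ (A j i).im = 0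

theorem IsRealification.exists_pair_eq_re_im (h : IsRealification σ A B) {i : Fin n}
    (hi : (i : ℕ) < 2 * σ) (heven : (i : ℕ) % 2 = 0) : ∃ hi' : (i : ℕ) + 1 < n, ∀ j,
      B j i = (A j i).re ∧ B j ⟨i + 1, hi'⟩ = (A j i).im ∧ A j ⟨i + 1, hi'⟩ = conj (A j i) := by
  obtain ⟨hi', hconj, hre, him⟩ := h.1 i hi heven
  refine ⟨hi', fun j => ⟨?_, ?_, hconj j⟩⟩
  · rw [hre, hconj, re_eq_add_conj]
  · rw [him, hconj, im_eq_sub_conj]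

theorem IsRealification.im_eq_zero (h : IsRealification σ A B) (j : Fin m) (i : Fin n) :
    (B j i).im = 0 := by
  refine Fin.forall_of_forall_pairs (σ := σ) (P := fun i => ∀ j, (B j i).im = 0)
    (fun i hi heven => ?_) (fun i hi j => ?_) i j
  · obtain ⟨hi', hB⟩ := h.exists_pair_eq_re_im hi heven
    exact ⟨hi', fun j => by rw [(hB j).1, ofReal_im], fun j => by rw [(hB j).2.1, ofReal_im]⟩
  · rw [(h.2 i hi j).1, (h.2 i hi j).2]

theorem IsRealification.eq_mul_complexifyMatrix (h : IsRealification σ A B) :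
    A = B * complexifyMatrix n σ := by
  ext j i
  refine Fin.forall_of_forall_pairs (σ := σ)
    (P := fun i => ∀ j, A j i = (B * complexifyMatrix n σ) j i)
    (fun i hi heven => ?_) (fun i hi j => ?_) i j
  · obtain ⟨hi', hB⟩ := h.exists_pair_eq_re_im hi heven
    refine ⟨hi', fun j => ?_, fun j => ?_⟩
    · rw [mul_complexifyMatrix_apply_fst B j hi heven (i' := ⟨i + 1, hi'⟩) rfl, (hB j).1,
        (hB j).2.1, re_add_im]
    · rw [mul_complexifyMatrix_apply_snd B j hi heven rfl, (hB j).1, (hB j).2.1, (hB j).2.2]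
      apply Complex.ext <;> simp
  · rw [mul_complexifyMatrix_apply_of_le B j hi, (h.2 i hi j).1]

end IsRealification

namespace Matrix

theorem map_ofReal_map_re {ι κ : Type*} {M : Matrix κ ι ℂ} (h : ∀ k i, (M k i).im = 0) :
    (M.map re).map ofReal = M := by
  ext k i
  exact Complex.ext rfl (h k i).symm

variable {ι κ : Type*} [Fintype ι] [DecidableEq ι]

theorem isUnit_of_isUnit_map {K L : Type*} [Field K] [CommRing L] [Nontrivial L] (f : K →+* L)
    {M : Matrix ι ι K} (h : IsUnit (M.map f)) : IsUnit M := by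
  rw [isUnit_iff_isUnit_det] at h ⊢
  rw [← RingHom.mapMatrix_apply, ← RingHom.map_det] at h
  exact isUnit_iff_ne_zero.2 fun h0 => by simp [h0] at h

theorem map_mul_inv_mul_map {R S : Type*} [CommRing R] [CommRing S] (f : R →+* S)
    {M : Matrix ι ι R} (hM : IsUnit M) (N : Matrix κ ι R) :
    (N * M⁻¹).map f * M.map f = N.map f := by
  rw [← Matrix.map_mul, nonsing_inv_mul_cancel_right _ _ ((isUnit_iff_isUnit_det M).1 hM)]

end Matrix

theorem realified_feedback_solves_complex_equation_general (n m σ : ℕ)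
    (V VR : Matrix (Fin n) (Fin n) ℂ) (W WR : Matrix (Fin m) (Fin n) ℂ)
    (hV : IsUnit V)
    (hpair : ∀ i : Fin n, (i : ℕ) < 2 * σ → (i : ℕ) % 2 = 0 →
      ∃ hi : (i : ℕ) + 1 < n,
        (∀ j, V j ⟨(i : ℕ) + 1, hi⟩ = starRingEnd ℂ (V j i)) ∧
        (∀ j, W j ⟨(i : ℕ) + 1, hi⟩ = starRingEnd ℂ (W j i)) ∧
        (∀ j, VR j i = (V j i + V j ⟨(i : ℕ) + 1, hi⟩) / 2) ∧
        (∀ j, VR j ⟨(i : ℕ) + 1, hi⟩ = (V j i - V j ⟨(i : ℕ) + 1, hi⟩) / (2 * Complex.I)) ∧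
        (∀ j, WR j i = (W j i + W j ⟨(i : ℕ) + 1, hi⟩) / 2) ∧
        (∀ j, WR j ⟨(i : ℕ) + 1, hi⟩ = (W j i - W j ⟨(i : ℕ) + 1, hi⟩) / (2 * Complex.I)))
    (hrealcol : ∀ i : Fin n, 2 * σ ≤ (i : ℕ) →
      (∀ j, VR j i = V j i ∧ (V j i).im = 0) ∧
      (∀ j, WR j i = W j i ∧ (W j i).im = 0)) :
    (∀ j i, (VR j i).im = 0) ∧ (∀ j i, (WR j i).im = 0) ∧
    IsUnit (VR.map Complex.re) ∧
    (((WR.map Complex.re) * (VR.map Complex.re)⁻¹).map (Complex.ofReal)) * V = W := by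
  have hVR : IsRealification σ V VR :=
    ⟨fun i hi heven => (hpair i hi heven).imp fun _ h => ⟨h.1, h.2.2.1, h.2.2.2.1⟩,
      fun i hi => (hrealcol i hi).1⟩
  have hWR : IsRealification σ W WR :=
    ⟨fun i hi heven => (hpair i hi heven).imp fun _ h => ⟨h.2.1, h.2.2.2.2⟩,
      fun i hi => (hrealcol i hi).2⟩
  have hV_eq := hVR.eq_mul_complexifyMatrix
  have hVR_ofReal := Matrix.map_ofReal_map_re hVR.im_eq_zero
  have hVR_unit : IsUnit VR := isUnit_of_mul_isUnit_left (hV_eq ▸ hV)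
  have hVR_re_unit : IsUnit (VR.map re) :=
    Matrix.isUnit_of_isUnit_map ofRealHom (hVR_ofReal ▸ hVR_unit)
  have hcancel : (WR.map re * (VR.map re)⁻¹).map ofReal * (VR.map re).map ofReal =
      (WR.map re).map ofReal :=
    Matrix.map_mul_inv_mul_map ofRealHom hVR_re_unit (WR.map re)
  refine ⟨hVR.im_eq_zero, hWR.im_eq_zero, hVR_re_unit, ?_⟩
  calc (WR.map re * (VR.map re)⁻¹).map ofReal * V
      = (WR.map re * (VR.map re)⁻¹).map ofReal * (VR.map re).map ofReal *
          complexifyMatrix n σ := by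
        rw [Matrix.mul_assoc, hVR_ofReal, hV_eq]
    _ = W := by
      rw [hcancel, Matrix.map_ofReal_map_re hWR.im_eq_zero, hWR.eq_mul_complexifyMatrix]

/-- If `V ∈ ℂ^{n×n}` (invertible) and `W ∈ ℂ^{m×n}` are σ-conformably
ordered (columns in conjugate pairs for indices < 2σ, 0-based pairs `(2k, 2k+1)`, real
afterwards) and `VR`, `WR` are their realifications, then `VR` and `WR` are real,
the real matrix `VR` is invertible, and the real matrix `F = WR VR⁻¹` satisfies
`F V = W` over ℂ. -/
theorem realified_feedback_solves_complex_equation (n m σ : ℕ) (h2σ : 2 * σ ≤ n)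
    (V VR : Matrix (Fin n) (Fin n) ℂ) (W WR : Matrix (Fin m) (Fin n) ℂ)
    (hV : IsUnit V)
    (hpair : ∀ i : Fin n, (i : ℕ) < 2 * σ → (i : ℕ) % 2 = 0 →
      ∃ hi : (i : ℕ) + 1 < n,
        (∀ j, V j ⟨(i : ℕ) + 1, hi⟩ = starRingEnd ℂ (V j i)) ∧
        (∀ j, W j ⟨(i : ℕ) + 1, hi⟩ = starRingEnd ℂ (W j i)) ∧
        (∀ j, VR j i = (V j i + V j ⟨(i : ℕ) + 1, hi⟩) / 2) ∧
        (∀ j, VR j ⟨(i : ℕ) + 1, hi⟩ = (V j i - V j ⟨(i : ℕ) + 1, hi⟩) / (2 * Complex.I)) ∧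
        (∀ j, WR j i = (W j i + W j ⟨(i : ℕ) + 1, hi⟩) / 2) ∧
        (∀ j, WR j ⟨(i : ℕ) + 1, hi⟩ = (W j i - W j ⟨(i : ℕ) + 1, hi⟩) / (2 * Complex.I)))
    (hrealcol : ∀ i : Fin n, 2 * σ ≤ (i : ℕ) →
      (∀ j, VR j i = V j i ∧ (V j i).im = 0) ∧
      (∀ j, WR j i = W j i ∧ (W j i).im = 0)) :
    (∀ j i, (VR j i).im = 0) ∧ (∀ j i, (WR j i).im = 0) ∧
    IsUnit (VR.map Complex.re) ∧
    (((WR.map Complex.re) * (VR.map Complex.re)⁻¹).map (Complex.ofReal)) * V = W :=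
  realified_feedback_solves_complex_equation_general n m σ V VR W WR hV hpair hrealcol
end
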